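/- arXiv:0906.1553 — 5 statements merged into one kernel-verified Lean document; each statement's English description precedes it below -/
import Mathlib

section
/- For every nonnegative integer n, the renormalized Charlier polynomial C_n(a,r) equals the sum over all Charlier configurations Phi = ((A, sigma), B) on {1,...,n} of a^(number of cycles of sigma) * r^(|B|), where (A,B) ranges over ordered partitions of {1,...,n} and sigma over permutations of A. -/
open Finset

/-- Rising factorial `(a)_k`. -/
noncomputable def rf {R : Type*} [CommRing R] (a : R) (k : ℕ) : R :=
  (ascPochhammer R k).eval a

/-- Renormalized Charlier polynomial. -/
noncomputable def Ch {R : Type*} [CommRing R] (a r : R) (n : ℕ) : R :=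
  ∑ k ∈ Finset.range (n + 1), (n.choose k : R) * rf a k * r ^ (n - k)

/-- Number of cycles of a permutation, counting fixed points as cycles. -/
def cyc {α : Type*} [Fintype α] [DecidableEq α] (π : Equiv.Perm α) : ℕ :=
  π.cycleType.card + (Finset.univ.filter fun i => π i = i).card

/-!
Grouping the configurations by `B`, the identity reduces to the cycle generating function
`∑ σ ∈ S_k, a ^ cyc σ = (a)_k`. This follows by induction on `k`: a permutation of `Option α` is
a pair `(o, σ)` with `σ` a permutation of `α` (`Equiv.Perm.decomposeOption`). For `o = none` the
new point is an extra fixed point; otherwise it is spliced into the cycle of `o`, which leaves the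
number of cycles unchanged. So adding a point multiplies the sum by `a + |α|`.
-/

namespace Equiv.Perm

variable {α : Type*} [Fintype α] [DecidableEq α]

theorem cyc_add_card_support (σ : Perm α) :
    cyc σ + #σ.support = σ.cycleType.card + Fintype.card α := by
  have hfix : ({i | σ i = i} : Finset α) = σ.supportᶜ := by
    ext x
    simp [mem_support]
  rw [cyc, hfix, card_compl, add_assoc, Nat.sub_add_cancel (card_le_univ _)]

theorem cyc_one : cyc (1 : Perm α) = Fintype.card α := by
  simpa using cyc_add_card_support (1 : Perm α)

theorem IsCycle.cyc_add_card_support {c : Perm α} (hc : c.IsCycle) :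
    cyc c + #c.support = Fintype.card α + 1 := by
  rw [Perm.cyc_add_card_support, hc.cycleType, Multiset.card_singleton, add_comm]

theorem Disjoint.cyc_mul_add_card {σ τ : Perm α} (h : Disjoint σ τ) :
    cyc (σ * τ) + Fintype.card α = cyc σ + cyc τ := by
  have hσ := cyc_add_card_support σ
  have hτ := cyc_add_card_support τ
  have hστ := cyc_add_card_support (σ * τ)
  rw [h.cycleType_mul, h.card_support_mul, Multiset.card_add] at hστ
  omega

theorem cyc_extendDomain {β : Type*} [Fintype β] [DecidableEq β] {p : β → Prop}
    [DecidablePred p] (f : α ≃ Subtype p) (σ : Perm α) :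
    cyc (σ.extendDomain f) + Fintype.card α = cyc σ + Fintype.card β := by
  have hσ := cyc_add_card_support σ
  have hext := cyc_add_card_support (σ.extendDomain f)
  rw [cycleType_extendDomain, card_support_extend_domain] at hext
  omega

theorem support_swap_mul_of_apply_eq_self {c : Perm α} {z y : α} (hz : c z = z)
    (hy : c y ≠ y) : (swap z y * c).support = insert z c.support := by
  have hyz : y ≠ z := by rintro rfl; exact hy hz
  ext w
  rcases eq_or_ne w z with rfl | hwz
  · simp [hz, hyz]
  by_cases hcw : c w = y
  · have hwy : w ≠ y := by rintro rfl; exact hy hcw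
    simp [hcw, hwz, Ne.symm hwy, Ne.symm hwz]
  · have hcwz : c w ≠ z := fun h => hwz (c.injective (h.trans hz.symm))
    simp [swap_apply_of_ne_of_ne hcwz hcw, hwz]

theorem IsCycle.swap_mul_of_apply_eq_self {c : Perm α} (hc : c.IsCycle) {z y : α} (hz : c z = z)
    (hy : c y ≠ y) : (swap z y * c).IsCycle := by
  set d := swap z y * c
  have hyz : y ≠ z := by rintro rfl; exact hy hz
  have hpow_ne : ∀ j : ℕ, (c ^ j) y ≠ z := fun j h =>
    hyz ((c ^ j).injective (h.trans (pow_apply_eq_self_of_apply_eq_self hz j).symm))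
  have hdy : d y = c y := swap_apply_of_ne_of_ne (hpow_ne 1) hy
  -- `d` runs through the `c`-orbit of `y`, with a detour through `z` before returning to `y`.
  have horbit : ∀ j : ℕ, d.SameCycle y ((c ^ j) y) := by
    intro j
    induction j with
    | zero => exact SameCycle.refl d y
    | succ j ih =>
      by_cases hret : (c ^ (j + 1)) y = y
      · rw [hret]
      · have hstep : (c ^ (j + 1)) y = c ((c ^ j) y) := by rw [pow_succ', mul_apply]
        have : d ((c ^ j) y) = (c ^ (j + 1)) y := by
          rw [hstep] at hret ⊢
          exact swap_apply_of_ne_of_ne (hstep ▸ hpow_ne (j + 1)) hret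
        rw [← this]
        exact sameCycle_apply_right.2 ih
  refine ⟨y, by rw [hdy]; exact hy, fun w hw => ?_⟩
  rcases eq_or_ne w z with rfl | hwz
  · have hdz : d w = y := by simp [d, hz]
    exact sameCycle_apply_right.1 (hdz ▸ SameCycle.refl d y)
  · have hcw : c w ≠ w := by
      contrapose! hw
      rw [mul_apply, hw, swap_apply_of_ne_of_ne hwz]
      rintro rfl; exact hy hw
    obtain ⟨j, -, rfl⟩ := (hc.sameCycle hy hcw).exists_pow_eq'
    exact horbit j

theorem cyc_swap_mul_add_one {f : Perm α} {z y : α} (hz : f z = z) (hyz : y ≠ z) :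
    cyc (swap z y * f) + 1 = cyc f := by
  -- Split off the cycle `c` of `f` through `y` (`c = 1` if `f` fixes `y`);
  -- the swap merges `z` into it.
  obtain ⟨c, g, rfl, hcg, hdg, hcd⟩ : ∃ c g : Perm α, f = c * g ∧ Disjoint c g ∧
      Disjoint (swap z y * c) g ∧ cyc (swap z y * c) + 1 = cyc c := by
    by_cases hfy : f y = y
    · refine ⟨1, f, (one_mul f).symm, disjoint_one_left f, ?_, ?_⟩
      · rw [mul_one, disjoint_iff_disjoint_support, support_swap hyz.symm]
        simp [hz, hfy]
      · have := (isCycle_swap hyz.symm).cyc_add_card_support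
        rw [support_swap hyz.symm, card_pair hyz.symm] at this
        rw [mul_one, cyc_one]
        omega
    · set c := f.cycleOf y
      have hc : c.IsCycle := isCycle_cycleOf f hfy
      have hcz : c z = z := (cycleOf_apply f y z).trans (by split_ifs <;> simp [hz])
      have hcy : c y ≠ y := by simpa [c] using hfy
      have hdisj : Disjoint (f * c⁻¹) c := disjoint_mul_inv_of_mem_cycleFactorsFinset
        (cycleOf_mem_cycleFactorsFinset_iff.2 (mem_support.2 hfy))
      have hsupp := support_swap_mul_of_apply_eq_self hcz hcy
      refine ⟨c, f * c⁻¹, by rw [← hdisj.commute.eq, inv_mul_cancel_right], hdisj.symm, ?_, ?_⟩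
      · rw [disjoint_iff_disjoint_support, hsupp, Finset.disjoint_insert_left,
          ← disjoint_iff_disjoint_support]
        exact ⟨notMem_support.2 (by rw [mul_apply, inv_eq_iff_eq.2 hcz.symm, hz]), hdisj.symm⟩
      · have hd := (hc.swap_mul_of_apply_eq_self hcz hcy).cyc_add_card_support
        have := hc.cyc_add_card_support
        rw [hsupp, card_insert_of_notMem (notMem_support.2 hcz)] at hd
        omega
  have h1 := hcg.cyc_mul_add_card
  have h2 := hdg.cyc_mul_add_card
  rw [← mul_assoc]
  omega

theorem cyc_optionCongr (σ : Perm α) : cyc σ.optionCongr = cyc σ + 1 := by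
  have hext : σ.optionCongr = σ.extendDomain (optionIsSomeEquiv α).symm := by
    ext (_ | x) <;> simp [extendDomain]
  have := cyc_extendDomain (optionIsSomeEquiv α).symm σ
  rw [← hext, Fintype.card_option] at this
  omega

theorem cyc_decomposeOption_symm (o : Option α) (σ : Perm α) :
    cyc (decomposeOption.symm (o, σ)) = if o = none then cyc σ + 1 else cyc σ := by
  rcases o with _ | x
  · rw [decomposeOption_symm_apply, swap_self]
    exact cyc_optionCongr σ
  · have := cyc_swap_mul_add_one (f := σ.optionCongr) (z := none) (y := some x) rfl
      (Option.some_ne_none x)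
    rw [cyc_optionCongr] at this
    simpa using this

theorem cyc_permCongr {β : Type*} [Fintype β] [DecidableEq β] (e : α ≃ β) (σ : Perm α) :
    cyc (e.permCongr σ) = cyc σ := by
  let f : α ≃ {b : β // True} := e.trans (subtypeUnivEquiv fun _ => trivial).symm
  have hext : e.permCongr σ = σ.extendDomain f := by
    ext; simp [f, extendDomain, permCongr_apply]
  have := cyc_extendDomain f σ
  rw [← hext, Fintype.card_congr e] at this
  omega

end Equiv.Perm

section CycleGeneratingFunction

open Equiv

variable {R : Type*} [CommSemiring R] (a : R)

theorem sum_pow_cyc_perm_option (α : Type*) [Fintype α] [DecidableEq α] :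
    ∑ σ : Perm (Option α), a ^ cyc σ = (a + Fintype.card α) * ∑ σ : Perm α, a ^ cyc σ := by
  rw [← Perm.decomposeOption.symm.sum_comp, Fintype.sum_prod_type, Fintype.sum_option]
  simp only [Perm.cyc_decomposeOption_symm, reduceCtorEq, if_true, if_false, pow_succ,
    sum_const, card_univ, nsmul_eq_mul, ← sum_mul]
  ring

theorem sum_pow_cyc_perm_eq_ascPochhammer (α : Type*) [Fintype α] [DecidableEq α] :
    ∑ σ : Perm α, a ^ cyc σ = (ascPochhammer R (Fintype.card α)).eval a := by
  induction h : Fintype.card α generalizing α with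
  | zero =>
    have : IsEmpty α := Fintype.card_eq_zero_iff.1 h
    simp [Perm.cyc_one]
  | succ n ih =>
    obtain ⟨x₀⟩ : Nonempty α := Fintype.card_pos_iff.1 (by omega)
    let e := (optionSubtypeNe x₀).symm
    have hcard : Fintype.card {x // x ≠ x₀} = n := by simp [h]
    rw [Fintype.sum_equiv e.permCongr _ (fun τ => a ^ cyc τ) fun σ => by rw [Perm.cyc_permCongr],
      sum_pow_cyc_perm_option, ih _ hcard, hcard, ascPochhammer_succ_eval, mul_comm]

end CycleGeneratingFunction

/-- `C_n(a,r)` is the sum of the weights `a^(cyc σ) r^|B|` over all Charlier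
configurations `((A,σ),B)` on `{1,…,n}`: an ordered partition `(A,B)` of the set
together with a permutation `σ` of `A` (here `A` is the complement of `B`). -/
theorem stmt2 {R : Type*} [CommRing R] (n : ℕ) (a r : R) :
    Ch a r n =
      ∑ B : Finset (Fin n), ∑ σ : Equiv.Perm {x : Fin n // x ∉ B},
        a ^ cyc σ * r ^ B.card := by
  have hinner (B : Finset (Fin n)) :
      ∑ σ : Equiv.Perm {x : Fin n // x ∉ B}, a ^ cyc σ * r ^ B.card = rf a (n - #B) * r ^ #B := by
    rw [← sum_mul, sum_pow_cyc_perm_eq_ascPochhammer, rf, Fintype.card_subtype_compl,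
      Fintype.card_coe, Fintype.card_fin]
  rw [sum_congr rfl fun B _ => hinner B, ← powerset_univ,
    sum_powerset_apply_card (fun k => rf a (n - k) * r ^ k), card_univ, Fintype.card_fin, Ch,
    ← sum_range_reflect]
  refine sum_congr rfl fun k hk => ?_
  have hkn : k ≤ n := Nat.lt_succ_iff.1 (mem_range.1 hk)
  rw [Nat.add_sub_cancel, Nat.choose_symm hkn, Nat.sub_sub_self hkn, nsmul_eq_mul, mul_assoc]
end

section
/- Bilinear generating function for Charlier polynomials: as formal power series in x, sum_{n>=0} C_n(a,r) * C_n(b,s) * x^n / n! = e^(r*s*x) * sum_{n>=0} (a)_n * (b)_n * x^n / (n! * (1-s*x)^(n+a) * (1-r*x)^(n+b)). -/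
open Finset

/-- The formal power series `(1 - w x)^{-u} = ∑_m (u)_m w^m x^m / m!`. -/
noncomputable def binS {R : Type*} [CommRing R] [Algebra ℚ R] (u w : R) :
    PowerSeries R :=
  PowerSeries.mk fun m => (m.factorial : ℚ)⁻¹ • (rf u m * w ^ m)

/-!
Both sides have as coefficient of `x^M` the sum, over all compositions `M = n + i + j + t`, of
`(a)_{n+i} (b)_{n+j} s^{i+t} r^{j+t} / (n! i! j! t!)` (`charlierTerm`). On the right this is
immediate from `(a)_n (a+n)_i = (a)_{n+i}`. On the left, write `C_M(a,r) = ∑_{k+p=M} C(M,k) (a)_k r^p`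
and split the binomial coefficients of `C_{k+p}(b,s)` by Vandermonde's identity along `k = n + i`,
`p = j + t`. The two sums only bracket the compositions differently.
-/

open scoped Nat

theorem Finset.Nat.sum_antidiagonal_antidiagonal_assoc {M : Type*} [AddCommMonoid M]
    (f : ℕ → ℕ → ℕ → ℕ → M) (m : ℕ) :
    ∑ kp ∈ antidiagonal m, ∑ ni ∈ antidiagonal kp.1, ∑ jt ∈ antidiagonal kp.2,
        f ni.1 ni.2 jt.1 jt.2 =
      ∑ tN ∈ antidiagonal m, ∑ nq ∈ antidiagonal tN.2, ∑ ij ∈ antidiagonal nq.2,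
        f nq.1 ij.1 ij.2 tN.1 := by
  simp only [← sum_product', sum_sigma']
  refine sum_nbij' (fun x => ⟨(x.2.2.2, x.2.1.1 + x.2.1.2 + x.2.2.1),
      ⟨(x.2.1.1, x.2.1.2 + x.2.2.1), (x.2.1.2, x.2.2.1)⟩⟩)
    (fun y => ⟨(y.2.1.1 + y.2.2.1, y.2.2.2 + y.1.1), ⟨(y.2.1.1, y.2.2.1), (y.2.2.2, y.1.1)⟩⟩)
    ?_ ?_ ?_ ?_ fun _ _ => rfl
  all_goals
    rintro ⟨⟨_, _⟩, ⟨_, _⟩, ⟨_, _⟩⟩ h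
    simp only [mem_sigma, mem_product, HasAntidiagonal.mem_antidiagonal, and_true] at h ⊢
  · omega
  · omega
  · obtain ⟨-, rfl, rfl⟩ := h
    rfl
  · obtain ⟨-, rfl, rfl⟩ := h
    rw [add_assoc]

theorem Finset.Nat.sum_antidiagonal_add_choose_nsmul {M : Type*} [AddCommMonoid M]
    (g : ℕ → ℕ → M) (k p : ℕ) :
    ∑ lq ∈ antidiagonal (k + p), (k + p).choose lq.1 • g lq.1 lq.2 =
      ∑ ni ∈ antidiagonal k, ∑ jt ∈ antidiagonal p,
        (k.choose ni.1 * p.choose jt.1) • g (ni.1 + jt.1) (ni.2 + jt.2) := by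
  simp only [Nat.add_choose_eq, sum_smul, ← sum_product', sum_sigma']
  symm
  refine sum_bij_ne_zero (fun x _ _ => ⟨(x.1.1 + x.2.1, x.1.2 + x.2.2), (x.1.1, x.2.1)⟩)
    ?_ ?_ ?_ fun _ _ _ => rfl
  · rintro ⟨⟨n, i⟩, ⟨j, t⟩⟩ h -
    simp only [mem_product, HasAntidiagonal.mem_antidiagonal, mem_sigma, and_true] at h ⊢
    omega
  · rintro ⟨⟨n, i⟩, ⟨j, t⟩⟩ h - ⟨⟨n', i'⟩, ⟨j', t'⟩⟩ h' - e
    simp only [mem_product, HasAntidiagonal.mem_antidiagonal, Sigma.mk.injEq, Prod.mk.injEq,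
      heq_iff_eq] at h h' e ⊢
    omega
  · rintro ⟨⟨l, q⟩, ⟨n, j⟩⟩ h hne
    simp only [mem_sigma, HasAntidiagonal.mem_antidiagonal] at h
    have hn : n ≤ k := by
      by_contra hn
      simp [Nat.choose_eq_zero_of_lt (not_le.mp hn)] at hne
    have hj : j ≤ p := by
      by_contra hj
      simp [Nat.choose_eq_zero_of_lt (not_le.mp hj)] at hne
    obtain ⟨rfl, rfl⟩ : n + j = l ∧ (k - n) + (p - j) = q := by omega
    refine ⟨((n, k - n), (j, p - j)), ?_, hne, rfl⟩
    simp only [mem_product, HasAntidiagonal.mem_antidiagonal]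
    omega

section CommRing

variable {R : Type*} [CommRing R]

theorem rf_add (a : R) (n m : ℕ) : rf a (n + m) = rf a n * rf (a + n) m := by
  simp [rf, ← ascPochhammer_mul, Polynomial.eval_comp, add_comm]

theorem Ch_eq_sum_antidiagonal (a r : R) (m : ℕ) :
    Ch a r m = ∑ kp ∈ antidiagonal m, m.choose kp.1 • (rf a kp.1 * r ^ kp.2) := by
  rw [Ch, Nat.sum_antidiagonal_eq_sum_range_succ (fun k p => m.choose k • (rf a k * r ^ p))]
  simp only [nsmul_eq_mul, mul_assoc]

theorem Ch_add (b s : R) (k p : ℕ) :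
    Ch b s (k + p) = ∑ ni ∈ antidiagonal k, ∑ jt ∈ antidiagonal p,
      (k.choose ni.1 * p.choose jt.1) • (rf b (ni.1 + jt.1) * s ^ (ni.2 + jt.2)) := by
  rw [Ch_eq_sum_antidiagonal]
  exact Nat.sum_antidiagonal_add_choose_nsmul (fun l q => rf b l * s ^ q) k p

end CommRing

section Algebra

variable {R : Type*} [CommRing R] [Algebra ℚ R]

noncomputable def charlierTerm (a b r s : R) (n i j t : ℕ) : R :=
  ((n ! : ℚ) * i ! * j ! * t !)⁻¹ • (rf a (n + i) * rf b (n + j) * (s ^ (i + t) * r ^ (j + t)))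

theorem factorial_inv_mul_choose_mul_choose (n i j t : ℕ) :
    ((n + i + (j + t))! : ℚ)⁻¹ *
        ((n + i + (j + t)).choose (n + i) * ((n + i).choose n * (j + t).choose j)) =
      ((n ! : ℚ) * i ! * j ! * t !)⁻¹ := by
  rw [Nat.cast_add_choose, Nat.cast_add_choose, Nat.cast_add_choose]
  field_simp

theorem inv_factorial_smul_Ch_mul_Ch (a b r s : R) (m : ℕ) :
    (m ! : ℚ)⁻¹ • (Ch a r m * Ch b s m) =
      ∑ kp ∈ antidiagonal m, ∑ ni ∈ antidiagonal kp.1, ∑ jt ∈ antidiagonal kp.2,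
        charlierTerm a b r s ni.1 ni.2 jt.1 jt.2 := by
  rw [Ch_eq_sum_antidiagonal a r, sum_mul, smul_sum]
  refine sum_congr rfl fun ⟨k, p⟩ hkp => ?_
  rw [HasAntidiagonal.mem_antidiagonal] at hkp
  subst hkp
  rw [Ch_add, mul_sum, smul_sum]
  refine sum_congr rfl fun ⟨n, i⟩ hni => ?_
  rw [mul_sum, smul_sum]
  refine sum_congr rfl fun ⟨j, t⟩ hjt => ?_
  rw [HasAntidiagonal.mem_antidiagonal] at hni hjt
  subst hni hjt
  rw [charlierTerm, ← factorial_inv_mul_choose_mul_choose]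
  simp only [← Nat.cast_smul_eq_nsmul ℚ, smul_mul_smul_comm, smul_smul, Nat.cast_mul]
  congr 1
  ring

theorem charlierTerm_eq_mul (a b r s : R) (n i j t : ℕ) :
    charlierTerm a b r s n i j t =
      ((t ! : ℚ)⁻¹ • (r * s) ^ t) * (((n ! : ℚ)⁻¹ • (rf a n * rf b n)) *
        (((i ! : ℚ)⁻¹ • (rf (a + n) i * s ^ i)) * ((j ! : ℚ)⁻¹ • (rf (b + n) j * r ^ j)))) := by
  rw [charlierTerm, rf_add a n i, rf_add b n j]
  simp only [smul_mul_smul_comm]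
  congr 1
  · field_simp
  · ring

end Algebra

/-- Bilinear generating function for Charlier polynomials:
`∑ C_n(a,r) C_n(b,s) x^n/n! = e^{rsx} ∑_n (a)_n (b)_n x^n /(n! (1-sx)^{n+a} (1-rx)^{n+b})`.
The inner sum has an explicit factor `x^n`, which is reflected by taking the
coefficient of `x^{N-n}` of `(1-sx)^{-(n+a)} (1-rx)^{-(n+b)}`. -/
theorem stmt5 {R : Type*} [CommRing R] [Algebra ℚ R] (a b r s : R) :
    PowerSeries.mk (fun n => (n.factorial : ℚ)⁻¹ • (Ch a r n * Ch b s n)) =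
      PowerSeries.mk (fun t => (t.factorial : ℚ)⁻¹ • (r * s) ^ t) *
        PowerSeries.mk (fun N => ∑ n ∈ Finset.range (N + 1),
          ((n.factorial : ℚ)⁻¹ • (rf a n * rf b n)) *
            PowerSeries.coeff (R := R) (N - n)
              (binS (a + (n : R)) s * binS (b + (n : R)) r)) := by
  ext m
  rw [PowerSeries.coeff_mk, PowerSeries.coeff_mul, inv_factorial_smul_Ch_mul_Ch,
    Nat.sum_antidiagonal_antidiagonal_assoc]
  refine sum_congr rfl fun ⟨t, N⟩ _ => ?_
  rw [PowerSeries.coeff_mk, PowerSeries.coeff_mk, Nat.sum_antidiagonal_eq_sum_range_succ_mk,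
    mul_sum]
  refine sum_congr rfl fun n _ => ?_
  rw [binS, binS, PowerSeries.coeff_mul, mul_sum, mul_sum]
  refine sum_congr rfl fun ⟨i, j⟩ _ => ?_
  rw [PowerSeries.coeff_mk, PowerSeries.coeff_mk]
  exact charlierTerm_eq_mul a b r s n i j t
end

section
/- The polynomials D_n(alpha, u) = sum_{pi in S_n} alpha^(cyc>1(pi)) * u^(fix(pi)), where cyc>1(pi) counts cycles of length greater than 1 and fix(pi) counts fixed points, satisfy C_n(a, r) = D_n(a, a + r) for all n, as a polynomial identity in a and r. -/
/-!
Regard `D_n(α, X)` as a polynomial in `X`. Writing a permutation of `Fin (n + 1)` as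
`swap 0 p * e'` with `e'` a permutation of the points `≠ 0` (`decomposeFin`), the point `0` is
either a new fixed point (`p = 0`), forms a 2-cycle with a fixed point `p` of `e'`, or is inserted
into a cycle of `e'` next to `p`. Counting fixed points and nontrivial cycles in the three cases
gives `D_{n+1} = (X + n) D_n + (α - X) D_n'`. The binomial convolution
`C_n(α, X - α) = ∑ binom(n, k) (α)_k (X - α)^(n-k)` satisfies the same recursion, by Pascal's rule
and `(α)_{k+1} = (α)_k (α + k)`, and both start at `1`. Evaluating at `X = α + r` gives the
identity.
-/

open Finset

/-- Number of fixed points of a permutation. -/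
def fixc {α : Type*} [Fintype α] [DecidableEq α] (π : Equiv.Perm α) : ℕ :=
  (Finset.univ.filter fun i => π i = i).card

/-- `D_n(α,u) = ∑_{π ∈ S_n} α^{cyc_{>1}(π)} u^{fix(π)}`; the number of cycles of
length `> 1` is the number of parts of the cycle type. -/
noncomputable def Dpol {R : Type*} [CommRing R] (n : ℕ) (α u : R) : R :=
  ∑ π : Equiv.Perm (Fin n), α ^ π.cycleType.card * u ^ fixc π

open Equiv Equiv.Perm Polynomial

namespace Equiv.Perm

variable {α : Type*} [DecidableEq α]

theorem fixc_add_card_support [Fintype α] (π : Perm α) : fixc π + #π.support = Fintype.card α :=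
  card_filter_add_card_filter_not _

theorem card_cycleType_swap_apply_mul [Fintype α] {f : Perm α} {x : α} (hx : f x ≠ x)
    (hffx : f (f x) ≠ x) :
    (swap x (f x) * f).cycleType.card = f.cycleType.card := by
  set c := f.cycleOf x
  have hcx : c x = f x := cycleOf_apply_self f x
  have hccx : c (c x) ≠ x := by rwa [hcx, cycleOf_apply_apply_self]
  have hc : c.IsCycle := isCycle_cycleOf f hx
  have hdisj : (f * c⁻¹).Disjoint c := disjoint_mul_inv_of_mem_cycleFactorsFinset
    (cycleOf_mem_cycleFactorsFinset_iff.mpr (mem_support.mpr hx))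
  have hdisj' : (f * c⁻¹).Disjoint (swap x (c x) * c) :=
    hdisj.mono le_rfl (by rw [support_swap_mul_eq _ _ hccx]; exact sdiff_subset)
  have hf : c * (f * c⁻¹) = f := by rw [← hdisj.commute.eq, inv_mul_cancel_right]
  have hswap : swap x (f x) * f = (swap x (c x) * c) * (f * c⁻¹) := by
    rw [mul_assoc, hf, hcx]
  conv_rhs => rw [← hf]
  rw [hswap, hdisj'.symm.cycleType_mul, hdisj.symm.cycleType_mul,
    (hc.swap_mul (hcx ▸ hx) hccx).cycleType, hc.cycleType]
  simp

section InsertFixedPoint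

variable {g : Perm α} {x y : α}

theorem swap_mul_apply_swap_mul_apply_ne (hx : g x = x) (hy : g y ≠ y) :
    (swap x y * g) ((swap x y * g) x) ≠ x := by
  have hxy : x ≠ y := fun h => hy (h ▸ hx)
  have hgy : g y ≠ x := fun h => hxy (g.injective (hx.trans h.symm))
  simp [hx, swap_apply_of_ne_of_ne hgy hy, hgy]

theorem support_swap_mul_of_apply_ne [Fintype α] (hx : g x = x) (hy : g y ≠ y) :
    (swap x y * g).support = insert x g.support := by
  have hxy : x ≠ y := fun h => hy (h ▸ hx)
  have h := support_swap_mul_eq (swap x y * g) x (swap_mul_apply_swap_mul_apply_ne hx hy)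
  simp only [mul_apply, hx, swap_apply_left, swap_mul_self_mul] at h
  rw [h, sdiff_singleton_eq_erase, insert_erase]
  simp [hx, hxy.symm]

theorem card_cycleType_swap_mul_of_apply_ne [Fintype α] (hx : g x = x) (hy : g y ≠ y) :
    (swap x y * g).cycleType.card = g.cycleType.card := by
  have hxy : x ≠ y := fun h => hy (h ▸ hx)
  have h := card_cycleType_swap_apply_mul (f := swap x y * g) (x := x)
    (by simpa [hx] using hxy.symm) (swap_mul_apply_swap_mul_apply_ne hx hy)
  simp only [mul_apply, hx, swap_apply_left, swap_mul_self_mul] at h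
  exact h.symm

theorem fixc_swap_mul_add_one [Fintype α] (hx : g x = x) (hy : g y ≠ y) :
    fixc (swap x y * g) + 1 = fixc g := by
  have h₁ := fixc_add_card_support g
  have h₂ := fixc_add_card_support (swap x y * g)
  rw [support_swap_mul_of_apply_ne hx hy, card_insert_of_notMem (notMem_support.mpr hx)] at h₂
  omega

theorem disjoint_swap_of_apply_eq (hx : g x = x) (hy : g y = y) : (swap x y).Disjoint g := by
  intro z
  by_cases hzx : z = x
  · exact Or.inr (hzx ▸ hx)
  by_cases hzy : z = y
  · exact Or.inr (hzy ▸ hy)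
  exact Or.inl (swap_apply_of_ne_of_ne hzx hzy)

theorem card_cycleType_swap_mul_of_apply_eq [Fintype α] (hxy : x ≠ y) (hx : g x = x)
    (hy : g y = y) :
    (swap x y * g).cycleType.card = g.cycleType.card + 1 := by
  rw [(disjoint_swap_of_apply_eq hx hy).cycleType_mul, (isCycle_swap hxy).cycleType]
  simp [add_comm]

theorem fixc_swap_mul_add_two [Fintype α] (hxy : x ≠ y) (hx : g x = x) (hy : g y = y) :
    fixc (swap x y * g) + 2 = fixc g := by
  have h₁ := fixc_add_card_support g
  have h₂ := fixc_add_card_support (swap x y * g)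
  rw [(disjoint_swap_of_apply_eq hx hy).card_support_mul, card_support_swap hxy] at h₂
  omega

end InsertFixedPoint

theorem decomposeFin_symm_zero {m : ℕ} (e : Perm (Fin m)) :
    decomposeFin.symm (0, e) = e.extendDomain (finSuccAboveEquiv 0) := by
  ext x
  cases x using Fin.cases with
  | zero => simp [extendDomain_apply_not_subtype]
  | succ i =>
    have h : i.succ = (finSuccAboveEquiv (0 : Fin (m + 1)) i : Fin (m + 1)) := rfl
    rw [decomposeFin_symm_apply_succ, h, extendDomain_apply_image]
    simp [finSuccAboveEquiv_apply]

theorem decomposeFin_symm_eq_swap_mul {m : ℕ} (p : Fin (m + 1)) (e : Perm (Fin m)) :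
    decomposeFin.symm (p, e) = swap 0 p * decomposeFin.symm (0, e) := by
  ext x
  cases x using Fin.cases <;> simp [decomposeFin_symm_apply_succ]

theorem cycleType_decomposeFin_symm_zero {m : ℕ} (e : Perm (Fin m)) :
    (decomposeFin.symm (0, e)).cycleType = e.cycleType := by
  rw [decomposeFin_symm_zero, cycleType_extendDomain]

theorem fixc_decomposeFin_symm_zero {m : ℕ} (e : Perm (Fin m)) :
    fixc (decomposeFin.symm (0, e)) = fixc e + 1 := by
  have h₁ := fixc_add_card_support e
  have h₂ := fixc_add_card_support (decomposeFin.symm (0, e))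
  rw [decomposeFin_symm_zero, card_support_extend_domain] at h₂
  rw [decomposeFin_symm_zero]
  simp only [Fintype.card_fin] at h₁ h₂
  omega

theorem sum_perm_fin_succ {M : Type*} [AddCommMonoid M] (F : ℕ → ℕ → M) (m : ℕ) :
    ∑ π : Perm (Fin (m + 1)), F π.cycleType.card (fixc π) =
      ∑ e : Perm (Fin m), (F e.cycleType.card (fixc e + 1)
        + fixc e • F (e.cycleType.card + 1) (fixc e - 1)
        + #e.support • F e.cycleType.card (fixc e)) := by
  rw [← decomposeFin.symm.sum_comp, Fintype.sum_prod_type, sum_comm]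
  refine sum_congr rfl fun e _ => ?_
  set g := decomposeFin.symm (0, e) with hg
  have hg0 : g 0 = 0 := decomposeFin_symm_apply_zero 0 e
  have hgsucc (q : Fin m) : g q.succ = (e q).succ := by simp [hg, decomposeFin_symm_apply_succ]
  have hc : g.cycleType.card = e.cycleType.card := by rw [cycleType_decomposeFin_symm_zero]
  have hf : fixc g = fixc e + 1 := fixc_decomposeFin_symm_zero e
  have hterm (q : Fin m) :
      F (decomposeFin.symm (q.succ, e)).cycleType.card (fixc (decomposeFin.symm (q.succ, e))) =
        if e q = q then F (e.cycleType.card + 1) (fixc e - 1) else F e.cycleType.card (fixc e) := by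
    have h0q : (0 : Fin (m + 1)) ≠ q.succ := (Fin.succ_ne_zero q).symm
    rw [decomposeFin_symm_eq_swap_mul, ← hg]
    split_ifs with hq
    · have hgq : g q.succ = q.succ := by rw [hgsucc, hq]
      have := fixc_swap_mul_add_two h0q hg0 hgq
      rw [card_cycleType_swap_mul_of_apply_eq h0q hg0 hgq, hc]
      congr 1
      omega
    · have hgq : g q.succ ≠ q.succ := by rwa [hgsucc, ne_eq, Fin.succ_inj]
      have := fixc_swap_mul_add_one hg0 hgq
      rw [card_cycleType_swap_mul_of_apply_ne hg0 hgq, hc]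
      congr 1
      omega
  rw [Fin.sum_univ_succ, sum_congr rfl fun q _ => hterm q, sum_ite, sum_const, sum_const,
    ← hg, hc, hf, add_assoc]
  rfl

end Equiv.Perm

theorem mul_natCast_mul_pow_sub_one {S : Type*} [CommSemiring S] (x : S) (f : ℕ) :
    x * (f * x ^ (f - 1)) = f * x ^ f := by
  rcases eq_or_ne f 0 with rfl | hf
  · simp
  · rw [mul_left_comm, mul_pow_sub_one hf]

section Dpolynomial

variable {R : Type*} [CommRing R]

noncomputable def Dpolynomial (α : R) (n : ℕ) : R[X] :=
  ∑ π : Perm (Fin n), C (α ^ π.cycleType.card) * X ^ fixc π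

theorem eval_Dpolynomial (α u : R) (n : ℕ) : (Dpolynomial α n).eval u = Dpol n α u := by
  simp [Dpolynomial, Dpol, eval_finsetSum]

theorem Dpolynomial_succ (α : R) (m : ℕ) :
    Dpolynomial α (m + 1) =
      (X + (m : R[X])) * Dpolynomial α m + (C α - X) * derivative (Dpolynomial α m) := by
  rw [Dpolynomial, sum_perm_fin_succ (fun c f => C (α ^ c) * X ^ f), Dpolynomial,
    derivative_sum, mul_sum, mul_sum, ← sum_add_distrib]
  refine sum_congr rfl fun e _ => ?_
  have hsupp : (#e.support : R[X]) = m - fixc e := by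
    have h := fixc_add_card_support e
    rw [Fintype.card_fin] at h
    rw [eq_sub_iff_add_eq', ← Nat.cast_add, h]
  rw [nsmul_eq_mul, nsmul_eq_mul, hsupp, derivative_C_mul, derivative_X_pow, map_natCast, map_pow,
    map_pow]
  linear_combination (C α) ^ e.cycleType.card * mul_natCast_mul_pow_sub_one (X : R[X]) (fixc e)

end Dpolynomial

section Ch

variable {R S : Type*} [CommRing R] [CommRing S]

theorem map_rf (f : R →+* S) (a : R) (k : ℕ) : f (rf a k) = rf (f a) k := by
  rw [rf, rf, ascPochhammer_eval₂ f, eval₂_at_apply]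

theorem map_Ch (f : R →+* S) (a r : R) (n : ℕ) : f (Ch a r n) = Ch (f a) (f r) n := by
  simp [Ch, map_rf]

theorem rf_succ (a : R) (k : ℕ) : rf a (k + 1) = rf a k * (a + k) :=
  ascPochhammer_succ_eval k a

theorem Ch_succ (a r : R) (n : ℕ) :
    Ch a r (n + 1) = (r + a + n) * Ch a r n -
      ∑ k ∈ range (n + 1), ((n - k : ℕ) : R) * ((n.choose k : R) * rf a k * r ^ (n - k)) := by
  have h := sum_choose_succ_mul (fun i j => rf a i * r ^ j) n
  simp only [← mul_assoc] at h
  rw [Ch, h, Ch, mul_sum, ← sum_sub_distrib, ← sum_add_distrib]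
  refine sum_congr rfl fun k hk => ?_
  have hkn : k ≤ n := Nat.lt_succ_iff.mp (mem_range.mp hk)
  rw [rf_succ, Nat.cast_sub hkn, Nat.sub_add_comm hkn, pow_succ]
  ring

theorem X_sub_C_mul_derivative_Ch (a : R) (n : ℕ) :
    (X - C a) * derivative (Ch (C a) (X - C a) n) =
      ∑ k ∈ range (n + 1),
        ((n - k : ℕ) : R[X]) * ((n.choose k : R[X]) * rf (C a) k * (X - C a) ^ (n - k)) := by
  rw [Ch, derivative_sum, mul_sum]
  refine sum_congr rfl fun k _ => ?_
  have hconst : (n.choose k : R[X]) * rf (C a) k = C (n.choose k * rf a k) := by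
    rw [C_mul, map_natCast, map_rf]
  rw [hconst, derivative_C_mul, derivative_X_sub_C_pow, map_natCast]
  linear_combination C ((n.choose k : R) * rf a k) * mul_natCast_mul_pow_sub_one (X - C a) (n - k)

theorem Ch_C_X_sub_C_succ (a : R) (m : ℕ) :
    Ch (C a) (X - C a) (m + 1) =
      (X + (m : R[X])) * Ch (C a) (X - C a) m + (C a - X) * derivative (Ch (C a) (X - C a) m) := by
  rw [Ch_succ, ← X_sub_C_mul_derivative_Ch]
  ring

end Ch

theorem Dpolynomial_eq_Ch {R : Type*} [CommRing R] (a : R) (n : ℕ) :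
    Dpolynomial a n = Ch (C a) (X - C a) n := by
  induction n with
  | zero => simp [Dpolynomial, Ch, rf, fixc]
  | succ m ih => rw [Dpolynomial_succ, ih, Ch_C_X_sub_C_succ]

theorem stmt7 {R : Type*} [CommRing R] (n : ℕ) (a r : R) :
    Ch a r n = Dpol n a (a + r) := by
  rw [← eval_Dpolynomial, Dpolynomial_eq_Ch, ← coe_evalRingHom, map_Ch]
  simp
end

section
/- For each permutation pi of {1,...,n}, the number of Charlier configurations ((A,sigma),B) on {1,...,n} whose associated permutation equals pi (where the associated permutation agrees with sigma on A and fixes every point of B) is 2^(fix(pi)), where fix(pi) is the number of fixed points of pi. Consequently, sum over all Charlier configurations on [n] of a^(cyc(sigma)) r^(|B|) equals sum_{pi in S_n} a^(cyc>1(pi)) (a+r)^(fix(pi)). -/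
/-!
A configuration with associated permutation `π` is determined by `B`, which can be any set of
fixed points of `π`: then `σ` is the restriction of `π` to the complement of `B`. That `σ` has
the nontrivial cycles of `π` and `fix π - |B|` fixed points, so the configurations over `π`
contribute `a ^ cyc>1(π) * ∑_{B ⊆ Fix π} a ^ (fix π - |B|) * r ^ |B| = a ^ cyc>1(π) * (a + r) ^ fix π`.
-/

open Finset

/-- The permutation of `Fin n` associated to the Charlier configuration
`((A,σ),B)`: it agrees with `σ` on `A` (the complement of `B`) and fixes every
point of `B`. -/
def assoc {n : ℕ} (B : Finset (Fin n)) (σ : Equiv.Perm {x : Fin n // x ∉ B}) :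
    Equiv.Perm (Fin n) :=
  σ.extendDomain (Equiv.refl {x : Fin n // x ∉ B})

open Equiv

section Fixc

variable {α : Type*} [Fintype α] [DecidableEq α]

lemma fixc_eq_card_compl_support (π : Perm α) : fixc π = π.supportᶜ.card := by
  unfold fixc
  congr 1
  ext x
  simp

lemma fixc_eq_card_sub_card_support (π : Perm α) :
    fixc π = Fintype.card α - π.support.card := by
  rw [fixc_eq_card_compl_support, Finset.card_compl]

lemma cyc_eq_card_cycleType_add_fixc (π : Perm α) : cyc π = π.cycleType.card + fixc π := rfl

lemma apply_notMem_iff_of_subset_compl_support {π : Perm α} {B : Finset α}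
    (hB : B ⊆ π.supportᶜ) (x : α) : π x ∉ B ↔ x ∉ B := by
  have hfix : ∀ {y}, y ∈ B → π y = y := fun hy => by simpa using hB hy
  refine not_congr ⟨fun hx => ?_, fun hx => (hfix hx).symm ▸ hx⟩
  rwa [← π.injective (hfix hx)]

end Fixc

abbrev CharlierConfig (n : ℕ) := (B : Finset (Fin n)) × Perm {x : Fin n // x ∉ B}

section Assoc

variable {n : ℕ} (B : Finset (Fin n)) (σ : Perm {x : Fin n // x ∉ B})

lemma assoc_apply_of_mem {x : Fin n} (hx : x ∈ B) : assoc B σ x = x :=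
  Perm.extendDomain_apply_not_subtype σ _ (not_not.mpr hx)

lemma assoc_apply_of_notMem {x : Fin n} (hx : x ∉ B) : assoc B σ x = σ ⟨x, hx⟩ :=
  Perm.extendDomain_apply_subtype σ (Equiv.refl _) hx

lemma subset_compl_support_assoc : B ⊆ (assoc B σ).supportᶜ := fun x hx => by
  simpa using assoc_apply_of_mem B σ hx

lemma fixc_assoc : fixc (assoc B σ) = fixc σ + B.card := by
  have hA : Fintype.card {x : Fin n // x ∉ B} = n - B.card := by
    rw [Fintype.card_subtype_compl, Fintype.card_coe, Fintype.card_fin]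
  have hsupp : σ.support.card ≤ n - B.card := hA ▸ σ.support.card_le_univ
  rw [fixc_eq_card_sub_card_support, fixc_eq_card_sub_card_support, hA, assoc,
    Perm.card_support_extend_domain, Fintype.card_fin]
  have hB : B.card ≤ n := by simpa using B.card_le_univ
  omega

lemma cyc_eq_of_assoc :
    cyc σ = (assoc B σ).cycleType.card + (fixc (assoc B σ) - B.card) := by
  rw [assoc, Perm.cycleType_extendDomain, ← assoc, fixc_assoc, Nat.add_sub_cancel,
    cyc_eq_card_cycleType_add_fixc]

end Assoc

def assocFiberEquiv {n : ℕ} (π : Perm (Fin n)) :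
    {cfg : CharlierConfig n // assoc cfg.1 cfg.2 = π} ≃ π.supportᶜ.powerset where
  toFun cfg := ⟨cfg.1.1, Finset.mem_powerset.mpr (by
    simpa only [cfg.2] using subset_compl_support_assoc cfg.1.1 cfg.1.2)⟩
  invFun B :=
    have hB := Finset.mem_powerset.mp B.2
    ⟨⟨B, π.subtypePerm (apply_notMem_iff_of_subset_compl_support hB)⟩, by
      ext x
      by_cases hx : x ∈ (B : Finset (Fin n))
      · rw [assoc_apply_of_mem _ _ hx, (by simpa using hB hx : π x = x)]
      · rw [assoc_apply_of_notMem _ _ hx]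
        rfl⟩
  left_inv := by
    rintro ⟨⟨B, σ⟩, rfl⟩
    refine Subtype.ext (congrArg (Sigma.mk B) (Perm.ext fun x => Subtype.ext ?_))
    exact assoc_apply_of_notMem B σ x.2
  right_inv _ := rfl

lemma card_assoc_fiber {n : ℕ} (π : Perm (Fin n)) :
    Fintype.card {cfg : CharlierConfig n // assoc cfg.1 cfg.2 = π} = 2 ^ fixc π := by
  rw [Fintype.card_congr (assocFiberEquiv π), Fintype.card_coe, Finset.card_powerset,
    fixc_eq_card_compl_support]

lemma sum_assoc_fiber {n : ℕ} {R : Type*} [CommSemiring R] (a r : R) (π : Perm (Fin n)) :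
    ∑ cfg : {cfg : CharlierConfig n // assoc cfg.1 cfg.2 = π},
        a ^ cyc cfg.1.2 * r ^ cfg.1.1.card =
      a ^ π.cycleType.card * (a + r) ^ fixc π := by
  have hterm : ∀ cfg : {cfg : CharlierConfig n // assoc cfg.1 cfg.2 = π},
      a ^ cyc cfg.1.2 * r ^ cfg.1.1.card = a ^ π.cycleType.card *
        (r ^ (assocFiberEquiv π cfg : Finset (Fin n)).card *
          a ^ (π.supportᶜ.card - (assocFiberEquiv π cfg : Finset (Fin n)).card)) := by
    rintro ⟨⟨B, σ⟩, rfl⟩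
    rw [cyc_eq_of_assoc, fixc_eq_card_compl_support, pow_add]
    simp only [assocFiberEquiv, Equiv.coe_fn_mk]
    ring
  rw [Fintype.sum_congr _ _ hterm, ← Finset.mul_sum,
    Equiv.sum_comp (assocFiberEquiv π) (fun B => r ^ (B : Finset (Fin n)).card *
      a ^ (π.supportᶜ.card - (B : Finset (Fin n)).card)),
    Finset.sum_coe_sort π.supportᶜ.powerset (fun B => r ^ B.card * a ^ (π.supportᶜ.card - B.card)),
    Finset.sum_pow_mul_eq_add_pow, add_comm r, fixc_eq_card_compl_support]

/-- For each `π ∈ S_n`, the number of Charlier configurations on `[n]` whose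
associated permutation is `π` equals `2^{fix(π)}`; consequently
`∑_{((A,σ),B)} a^{cyc(σ)} r^{|B|} = ∑_{π ∈ S_n} a^{cyc_{>1}(π)} (a+r)^{fix(π)}`. -/
theorem stmt16 {R : Type*} [CommRing R] (n : ℕ) (a r : R) :
    (∀ π : Equiv.Perm (Fin n),
      Fintype.card
          {cfg : (B : Finset (Fin n)) × Equiv.Perm {x : Fin n // x ∉ B} //
            assoc cfg.1 cfg.2 = π} = 2 ^ fixc π) ∧
    ∑ B : Finset (Fin n), ∑ σ : Equiv.Perm {x : Fin n // x ∉ B},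
        a ^ cyc σ * r ^ B.card =
      ∑ π : Equiv.Perm (Fin n), a ^ π.cycleType.card * (a + r) ^ fixc π := by
  refine ⟨card_assoc_fiber, ?_⟩
  rw [← Fintype.sum_sigma (fun cfg : CharlierConfig n => a ^ cyc cfg.2 * r ^ cfg.1.card),
    ← Fintype.sum_fiberwise (fun cfg : CharlierConfig n => assoc cfg.1 cfg.2)]
  exact Fintype.sum_congr _ _ (sum_assoc_fiber a r)
end

section
/- Trilinear coefficient identity (simplest nontrivial case of the multilinear formula with k=3): for all nonnegative integers L, M, N, the coefficient of x^L y^M z^N / (L! M! N!) in sum_{l,m,n} C_{l+m}(a,r) C_{l+n}(b,s) C_{m+n}(c,t) x^l y^m z^n/(l! m! n!) equals C_{L+M}(a,r) C_{L+N}(b,s) C_{M+N}(c,t), and this equals the corresponding coefficient of e^(rsx+rty+stz) * sum_{l,m,n} (a)_{l+m}(b)_{l+n}(c)_{m+n} x^l y^m z^n / (l! m! n! (1-sx-ty)^{l+m+a}(1-rx-tz)^{l+n+b}(1-ry-sz)^{m+n+c}), as a polynomial identity in a, b, c, r, s, t. -/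
open Finset

/-!
Expand each `C_{L+M}(a, r)` by Vandermonde's convolution as
`∑ C(L, x₁) C(M, x₂) (a)_{x₁+x₂} r^{L+M-x₁-x₂}`. In the nine-fold sum, the rising factorials
combine through `(a)_{l+m} (a+l+m)_{i₁+j₁} = (a)_{l+m+i₁+j₁}`, so each summand is a product of
three multinomial weights `1/(l! p! i₁! i₂!)`, ... times a function of `x₁ = l + i₁`,
`y₁ = l + i₂`, ... only. Summing `L!/(l! p! i₁! i₂!)` over `l + p + i₁ + i₂ = L` with `l + i₁ = x`,
`l + i₂ = y` counts pairs of subsets of sizes `x, y` of an `L`-set, i.e. gives `C(L, x) C(L, y)`.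
-/

open scoped Nat

section Reindexing
variable {M : Type*} [AddCommMonoid M]

theorem sum_range_choose_mul_choose_smul (m n : ℕ) (f : ℕ → M) :
    ∑ i ∈ range (m + 1), ∑ j ∈ range (n + 1), (m.choose i * n.choose j) • f (i + j) =
      ∑ k ∈ range (m + n + 1), (m + n).choose k • f k := by
  rw [← sum_product', ← sum_fiberwise_of_maps_to (g := fun ij : ℕ × ℕ ↦ ij.1 + ij.2)
    (t := range (m + n + 1))
    fun ij hij ↦ by simp only [mem_product, mem_range] at hij ⊢; omega]
  refine sum_congr rfl fun k _ ↦ ?_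
  rw [Nat.add_choose_eq, sum_smul]
  calc ∑ ij ∈ range (m + 1) ×ˢ range (n + 1) with ij.1 + ij.2 = k,
        (m.choose ij.1 * n.choose ij.2) • f (ij.1 + ij.2)
      = ∑ ij ∈ range (m + 1) ×ˢ range (n + 1) with ij.1 + ij.2 = k,
          (m.choose ij.1 * n.choose ij.2) • f k :=
        sum_congr rfl fun ij hij ↦ by rw [(mem_filter.1 hij).2]
    _ = _ := by
        refine sum_subset (fun ij hij ↦ by simpa using (mem_filter.1 hij).2) fun ij hk hij ↦ ?_
        simp only [mem_filter, mem_product, mem_range, HasAntidiagonal.mem_antidiagonal] at hk hij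
        rcases (by omega : m < ij.1 ∨ n < ij.2) with h | h <;> simp [Nat.choose_eq_zero_of_lt h]

theorem sum_range_simplex_reindex (L : ℕ) (F : ℕ → ℕ → ℕ → M) :
    ∑ l ∈ range (L + 1), ∑ p ∈ range (L - l + 1), ∑ i ∈ range (L - l - p + 1), F l p i =
      ∑ x ∈ range (L + 1), ∑ l ∈ range (x + 1), ∑ j ∈ range (L - x + 1),
        F l (L - x - j) (x - l) := by
  calc _ = ∑ l ∈ range (L + 1), ∑ i ∈ range (L + 1 - l), ∑ p ∈ range (L - l - i + 1), F l p i :=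
        sum_congr rfl fun l hl ↦ sum_comm' fun p i ↦ by
          simp only [mem_range] at hl ⊢; constructor <;> intro h <;> omega
    _ = ∑ x ∈ range (L + 1), ∑ l ∈ range (x + 1), ∑ p ∈ range (L - x + 1), F l p (x - l) := by
        rw [← sum_range_diag_flip]
        refine sum_congr rfl fun x hx ↦ sum_congr rfl fun l hl ↦ ?_
        rw [show L - l - (x - l) = L - x by simp only [mem_range] at hx hl; omega]
    _ = _ := sum_congr rfl fun x _ ↦ sum_congr rfl fun l _ ↦ by
        rw [← sum_range_reflect]; simp only [Nat.add_sub_cancel]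

theorem sum_comm_triple_blocks (sl sm sn : Finset ℕ) (sp sq su : ℕ → Finset ℕ)
    (si sj sk : ℕ → ℕ → Finset ℕ)
    (T : ℕ → ℕ → ℕ → ℕ → ℕ → ℕ → ℕ → ℕ → ℕ → M) :
    ∑ l ∈ sl, ∑ m ∈ sm, ∑ n ∈ sn, ∑ p ∈ sp l, ∑ i ∈ si l p,
      ∑ q ∈ sq m, ∑ j ∈ sj m q, ∑ u ∈ su n, ∑ k ∈ sk n u, T l m n p i q j u k =
    ∑ l ∈ sl, ∑ p ∈ sp l, ∑ i ∈ si l p, ∑ m ∈ sm, ∑ q ∈ sq m, ∑ j ∈ sj m q,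
      ∑ n ∈ sn, ∑ u ∈ su n, ∑ k ∈ sk n u, T l m n p i q j u k := by
  conv_lhs => enter [2, l, 2, m]; rw [sum_comm]
  conv_lhs => enter [2, l, 2, m, 2, p]; rw [sum_comm]
  conv_lhs => enter [2, l]; rw [sum_comm]
  conv_lhs => enter [2, l, 2, p]; rw [sum_comm]
  conv_lhs => enter [2, l, 2, p, 2, i, 2, m]; rw [sum_comm]
  conv_lhs => enter [2, l, 2, p, 2, i, 2, m, 2, q]; rw [sum_comm]

end Reindexing

section RisingFactorial
variable {R : Type*} [CommRing R]

theorem rf_mul_rf_add (x : R) (n k : ℕ) :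
    rf x n * rf (x + n) k = rf x (n + k) := by
  simp [rf, ← ascPochhammer_mul, Polynomial.eval_comp]

theorem rf_mul_rf_add_add (x : R) (m n k : ℕ) :
    rf x (m + n) * rf (x + m + n) k = rf x (m + n + k) := by
  rw [add_assoc x, ← Nat.cast_add, rf_mul_rf_add]

noncomputable def chSummand (a r : R) (n k : ℕ) : R :=
  rf a k * r ^ (n - k)

theorem Ch_add_eq (a r : R) (m n : ℕ) :
    Ch a r (m + n) = ∑ i ∈ range (m + 1), ∑ j ∈ range (n + 1),
      (m.choose i * n.choose j) • chSummand a r (m + n) (i + j) := by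
  rw [sum_range_choose_mul_choose_smul, Ch]
  simp only [chSummand, nsmul_eq_mul, mul_assoc]

end RisingFactorial

theorem factorial_mul_inv_eq_choose {L x l j : ℕ} (hx : x ≤ L) (hl : l ≤ x) (hj : j ≤ L - x) :
    (L ! : ℚ) * ((l ! * (L - x - j)! * (x - l)! * j ! : ℕ) : ℚ)⁻¹ =
      (L.choose x * (x.choose l * (L - x).choose j) : ℕ) := by
  rw [← Nat.choose_mul_factorial_mul_factorial hx, ← Nat.choose_mul_factorial_mul_factorial hl,
    ← Nat.choose_mul_factorial_mul_factorial hj]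
  push_cast
  field_simp

section Block
variable {M : Type*} [AddCommMonoid M] [Module ℚ M]

noncomputable def blockSum (L : ℕ) (f : ℕ → ℕ → M) : M :=
  ∑ l ∈ range (L + 1), ∑ p ∈ range (L - l + 1), ∑ i ∈ range (L - l - p + 1),
    ((l ! * p ! * i ! * (L - l - p - i)! : ℕ) : ℚ)⁻¹ • f (l + i) (l + (L - l - p - i))

theorem blockSum_smul (L : ℕ) (c : ℚ) (f : ℕ → ℕ → M) :
    c • blockSum L f = blockSum L fun x y ↦ c • f x y := by
  simp only [blockSum, smul_sum, smul_comm c]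

theorem factorial_smul_blockSum (L : ℕ) (f : ℕ → ℕ → M) :
    (L ! : ℚ) • blockSum L f =
      ∑ x ∈ range (L + 1), ∑ y ∈ range (L + 1), (L.choose x * L.choose y) • f x y := by
  rw [blockSum, sum_range_simplex_reindex, smul_sum]
  refine sum_congr rfl fun x hx ↦ ?_
  rw [mem_range, Nat.lt_succ_iff] at hx
  calc _ = ∑ l ∈ range (x + 1), ∑ j ∈ range (L - x + 1),
        (x.choose l * (L - x).choose j) • L.choose x • f x (l + j) := by
        rw [smul_sum]
        refine sum_congr rfl fun l hl ↦ ?_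
        rw [smul_sum]
        refine sum_congr rfl fun j hj ↦ ?_
        simp only [mem_range, Nat.lt_succ_iff] at hl hj
        rw [show l + (x - l) = x by omega, show L - l - (L - x - j) - (x - l) = j by omega,
          smul_smul, factorial_mul_inv_eq_choose hx hl hj, Nat.cast_smul_eq_nsmul, smul_smul,
          mul_comm (L.choose x)]
    _ = _ := by
        rw [sum_range_choose_mul_choose_smul x (L - x) fun k ↦ L.choose x • f x k,
          Nat.add_sub_cancel' hx]
        simp only [smul_smul, mul_comm]

end Block

theorem sum_mul_sum_mul_sum_regroup {R : Type*} [CommSemiring R] (s₁ s₂ s₃ : Finset ℕ)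
    (f g h : ℕ → ℕ → R) :
    (∑ x₁ ∈ s₁, ∑ x₂ ∈ s₂, f x₁ x₂) * (∑ y₁ ∈ s₁, ∑ y₂ ∈ s₃, g y₁ y₂) *
        (∑ z₁ ∈ s₂, ∑ z₂ ∈ s₃, h z₁ z₂) =
      ∑ x₁ ∈ s₁, ∑ y₁ ∈ s₁, ∑ x₂ ∈ s₂, ∑ z₁ ∈ s₂, ∑ y₂ ∈ s₃, ∑ z₂ ∈ s₃,
        f x₁ x₂ * g y₁ y₂ * h z₁ z₂ := by
  rw [sum_mul_sum, sum_mul]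
  refine sum_congr rfl fun x₁ _ ↦ ?_
  rw [sum_mul]
  refine sum_congr rfl fun y₁ _ ↦ ?_
  rw [sum_mul_sum, sum_mul_sum]
  simp only [sum_mul_sum]

section Coefficients
variable {R : Type*} [CommRing R] [Algebra ℚ R] (a b c r s t : R)

theorem Ch_mul_Ch_mul_Ch_eq_blockSum (L M N : ℕ) :
    Ch a r (L + M) * Ch b s (L + N) * Ch c t (M + N) =
      ((L ! * M ! * N ! : ℕ) : ℚ) • blockSum L fun x₁ y₁ ↦ blockSum M fun x₂ z₁ ↦
        blockSum N fun y₂ z₂ ↦ chSummand a r (L + M) (x₁ + x₂) *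
          chSummand b s (L + N) (y₁ + y₂) * chSummand c t (M + N) (z₁ + z₂) := by
  have regroup_weights : ∀ x₁ x₂ y₁ y₂ z₁ z₂ : ℕ,
      (L.choose x₁ * M.choose x₂) • chSummand a r (L + M) (x₁ + x₂) *
          ((L.choose y₁ * N.choose y₂) • chSummand b s (L + N) (y₁ + y₂)) *
          ((M.choose z₁ * N.choose z₂) • chSummand c t (M + N) (z₁ + z₂)) =
        (L.choose x₁ * L.choose y₁) • (M.choose x₂ * M.choose z₁) • (N.choose y₂ * N.choose z₂) •
          (chSummand a r (L + M) (x₁ + x₂) * chSummand b s (L + N) (y₁ + y₂) *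
            chSummand c t (M + N) (z₁ + z₂)) := by
    intros; simp only [nsmul_eq_mul]; push_cast; ring
  rw [Ch_add_eq, Ch_add_eq, Ch_add_eq, sum_mul_sum_mul_sum_regroup]
  simp only [regroup_weights, ← smul_sum]
  simp only [← factorial_smul_blockSum]
  simp only [blockSum_smul, smul_smul, Nat.cast_mul, mul_assoc]

-- `i₂, j₂, k₂` stand for the truncated differences `L - l - p - i1`, ... of the statement.
theorem term_factorization {L M N l m n p q u i₁ i₂ j₁ j₂ k₁ k₂ : ℕ} (hL : l + p + i₁ + i₂ = L)
    (hM : m + q + j₁ + j₂ = M) (hN : n + u + k₁ + k₂ = N) :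
    (((l ! * m ! * n ! : ℕ) : ℚ)⁻¹ • (rf a (l + m) * rf b (l + n) * rf c (m + n))) *
        ((p ! : ℚ)⁻¹ • (r * s) ^ p) * ((q ! : ℚ)⁻¹ • (r * t) ^ q) *
        ((u ! : ℚ)⁻¹ • (s * t) ^ u) *
        (((i₁ ! * j₁ ! : ℕ) : ℚ)⁻¹ • (rf (a + l + m) (i₁ + j₁) * s ^ i₁ * t ^ j₁)) *
        (((i₂ ! * k₁ ! : ℕ) : ℚ)⁻¹ • (rf (b + l + n) (i₂ + k₁) * r ^ i₂ * t ^ k₁)) *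
        (((j₂ ! * k₂ ! : ℕ) : ℚ)⁻¹ • (rf (c + m + n) (j₂ + k₂) * r ^ j₂ * s ^ k₂)) =
      ((l ! * p ! * i₁ ! * i₂ ! : ℕ) : ℚ)⁻¹ • ((m ! * q ! * j₁ ! * j₂ ! : ℕ) : ℚ)⁻¹ •
        ((n ! * u ! * k₁ ! * k₂ ! : ℕ) : ℚ)⁻¹ •
          (chSummand a r (L + M) (l + i₁ + (m + j₁)) * chSummand b s (L + N) (l + i₂ + (n + k₁)) *
            chSummand c t (M + N) (m + j₂ + (n + k₂))) := by
  subst hL hM hN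
  simp only [chSummand]
  rw [show l + i₁ + (m + j₁) = l + m + (i₁ + j₁) by ring,
    show l + i₂ + (n + k₁) = l + n + (i₂ + k₁) by ring,
    show m + j₂ + (n + k₂) = m + n + (j₂ + k₂) by ring,
    show l + p + i₁ + i₂ + (m + q + j₁ + j₂) - (l + m + (i₁ + j₁)) = p + q + i₂ + j₂ by omega,
    show l + p + i₁ + i₂ + (n + u + k₁ + k₂) - (l + n + (i₂ + k₁)) = p + u + i₁ + k₂ by omega,
    show m + q + j₁ + j₂ + (n + u + k₁ + k₂) - (m + n + (j₂ + k₂)) = q + u + j₁ + k₁ by omega,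
    ← rf_mul_rf_add_add, ← rf_mul_rf_add_add, ← rf_mul_rf_add_add]
  simp only [smul_mul_assoc, mul_smul_comm, smul_smul]
  congr 1
  · push_cast [mul_inv]; ring
  · ring

end Coefficients

/-- Trilinear (k=3) coefficient identity: for all `L, M, N`, the coefficient of
`x^L y^M z^N/(L! M! N!)` of `∑_{l,m,n} C_{l+m}(a,r) C_{l+n}(b,s) C_{m+n}(c,t)
x^l y^m z^n/(l! m! n!)` equals `C_{L+M}(a,r) C_{L+N}(b,s) C_{M+N}(c,t)`, and this
equals `L! M! N!` times the coefficient of `x^L y^M z^N` of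
`e^{rsx+rty+stz} ∑_{l,m,n} (a)_{l+m} (b)_{l+n} (c)_{m+n} x^l y^m z^n
/(l! m! n! (1-sx-ty)^{l+m+a} (1-rx-tz)^{l+n+b} (1-ry-sz)^{m+n+c})`,
expanded via `e^w = ∑ w^p/p!` and `(1-w)^{-u} = ∑ (u)_d w^d/d!`. -/
theorem stmt18 {R : Type*} [CommRing R] [Algebra ℚ R] (a b c r s t : R) :
    ∀ L M N : ℕ,
      Ch a r (L + M) * Ch b s (L + N) * Ch c t (M + N) =
        ((L.factorial * M.factorial * N.factorial : ℕ) : ℚ) •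
          ∑ l ∈ Finset.range (L + 1), ∑ m ∈ Finset.range (M + 1),
            ∑ n ∈ Finset.range (N + 1),
              ∑ p ∈ Finset.range (L - l + 1),
                ∑ i1 ∈ Finset.range (L - l - p + 1),
                  ∑ q ∈ Finset.range (M - m + 1),
                    ∑ j1 ∈ Finset.range (M - m - q + 1),
                      ∑ u ∈ Finset.range (N - n + 1),
                        ∑ k1 ∈ Finset.range (N - n - u + 1),
                          (((l.factorial * m.factorial * n.factorial : ℕ) : ℚ)⁻¹ •
                              (rf a (l + m) * rf b (l + n) * rf c (m + n))) *
                            ((p.factorial : ℚ)⁻¹ • (r * s) ^ p) *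
                            ((q.factorial : ℚ)⁻¹ • (r * t) ^ q) *
                            ((u.factorial : ℚ)⁻¹ • (s * t) ^ u) *
                            (((i1.factorial * j1.factorial : ℕ) : ℚ)⁻¹ •
                              (rf (a + (l : R) + (m : R)) (i1 + j1) *
                                s ^ i1 * t ^ j1)) *
                            ((((L - l - p - i1).factorial * k1.factorial : ℕ) : ℚ)⁻¹ •
                              (rf (b + (l : R) + (n : R)) ((L - l - p - i1) + k1) *
                                r ^ (L - l - p - i1) * t ^ k1)) *
                            ((((M - m - q - j1).factorial *
                                (N - n - u - k1).factorial : ℕ) : ℚ)⁻¹ •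
                              (rf (c + (m : R) + (n : R))
                                  ((M - m - q - j1) + (N - n - u - k1)) *
                                r ^ (M - m - q - j1) * s ^ (N - n - u - k1))) := by
  intro L M N
  rw [Ch_mul_Ch_mul_Ch_eq_blockSum, sum_comm_triple_blocks]
  congr 1
  simp only [blockSum, smul_sum]
  refine sum_congr rfl fun l hl ↦ sum_congr rfl fun p hp ↦ sum_congr rfl fun i₁ hi₁ ↦
    sum_congr rfl fun m hm ↦ sum_congr rfl fun q hq ↦ sum_congr rfl fun j₁ hj₁ ↦
    sum_congr rfl fun n hn ↦ sum_congr rfl fun u hu ↦ sum_congr rfl fun k₁ hk₁ ↦ ?_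
  simp only [mem_range] at hl hp hi₁ hm hq hj₁ hn hu hk₁
  exact (term_factorization a b c r s t (by omega) (by omega) (by omega)).symm
end
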